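/- arXiv:1806.08253 — 6 statements merged into one kernel-verified Lean document; each statement's English description precedes it below -/
import Mathlib

section
/- Define q : ℕ → ℕ recursively by q₁ = 2 and q_{n+1} = (2^{n+1})^{2^{q_n}}. Then for every n ≥ 1 the tail of the series of reciprocals satisfies ∑_{k=n+1}^∞ 1/q_k < (2^n)^{−2^{q_n}}. -/
/-!
The sequence at least doubles at every step, so the tail `∑_{k>n} 1/q_k` is at most twice its
first term `1/q_{n+1}`; and `q_{n+1} = 2^{2^{q_n}} (2^n)^{2^{q_n}}` with `2^{2^{q_n}} ≥ 4`.
-/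

theorem tsum_one_div_le_of_two_mul_le {a : ℕ → ℝ} (ha₀ : 0 < a 0)
    (ha : ∀ k, 2 * a k ≤ a (k + 1)) : ∑' k, 1 / a k ≤ 2 / a 0 := by
  have hgeom : ∀ k, a 0 * 2 ^ k ≤ a k := by
    intro k
    induction k with
    | zero => simp
    | succ k ih => rw [pow_succ]; linarith [ha k]
  have hle : ∀ k, 1 / a k ≤ 1 / a 0 * (1 / 2) ^ k := fun k => by
    rw [one_div_pow, one_div_mul_one_div]
    exact one_div_le_one_div_of_le (by positivity) (hgeom k)
  have hsum : HasSum (fun k => 1 / a 0 * (1 / 2 : ℝ) ^ k) (2 / a 0) := by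
    simpa [div_eq_inv_mul] using hasSum_geometric_two.mul_left (1 / a 0)
  have hpos : ∀ k, 0 ≤ 1 / a k := fun k =>
    one_div_nonneg.mpr ((mul_pos ha₀ (by positivity)).le.trans (hgeom k))
  exact ((Summable.of_nonneg_of_le hpos hle hsum.summable).tsum_le_tsum hle
    hsum.summable).trans_eq hsum.tsum_eq

theorem two_mul_le_pow_two_pow {b : ℕ} (hb : 2 ≤ b) (x : ℕ) : 2 * x ≤ b ^ 2 ^ x :=
  calc 2 * x ≤ 2 ^ (x + 1) := by
        rw [pow_succ']; exact Nat.mul_le_mul_left 2 Nat.lt_two_pow_self.le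
    _ ≤ 2 ^ 2 ^ x := Nat.pow_le_pow_right two_pos Nat.lt_two_pow_self
    _ ≤ b ^ 2 ^ x := Nat.pow_le_pow_left hb _

theorem two_div_two_mul_pow_lt {c : ℝ} (hc : 0 < c) {e : ℕ} (he : 2 ≤ e) :
    2 / (2 * c) ^ e < 1 / c ^ e := by
  have h4 : (4 : ℝ) ≤ 2 ^ e := by
    calc (4 : ℝ) = 2 ^ 2 := by norm_num
      _ ≤ 2 ^ e := pow_le_pow_right₀ one_le_two he
  have hce : 0 < c ^ e := by positivity
  rw [mul_pow, div_lt_div_iff₀ (by positivity) hce]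
  nlinarith

section Tower

variable {q : ℕ → ℕ} (hrec : ∀ n : ℕ, 1 ≤ n → q (n + 1) = (2 ^ (n + 1)) ^ (2 ^ q n))
include hrec

theorem tower_two_mul_le_succ {m : ℕ} (hm : 1 ≤ m) : 2 * q m ≤ q (m + 1) := by
  rw [hrec m hm]
  exact two_mul_le_pow_two_pow (Nat.le_self_pow (Nat.succ_ne_zero m) 2) _

theorem tower_two_le (h1 : q 1 = 2) {m : ℕ} (hm : 1 ≤ m) : 2 ≤ q m := by
  induction m, hm using Nat.le_induction with
  | base => exact h1.ge
  | succ m hm ih => linarith [tower_two_mul_le_succ hrec hm]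

end Tower

/-- With `q₁ = 2` and `q_{n+1} = (2^{n+1})^{2^{q_n}}`, the tail
of the series of reciprocals satisfies, for every `n ≥ 1`,
`∑_{k=n+1}^∞ 1/q_k < (2^n)^{−2^{q_n}}`. -/
theorem tower_power_tail_bound (q : ℕ → ℕ) (h1 : q 1 = 2)
    (hrec : ∀ n : ℕ, 1 ≤ n → q (n + 1) = (2 ^ (n + 1)) ^ (2 ^ q n)) :
    ∀ n : ℕ, 1 ≤ n →
      (∑' k : ℕ, (1 : ℝ) / q (n + 1 + k)) < 1 / ((2 : ℝ) ^ n) ^ (2 ^ q n) := by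
  intro n hn
  have hdouble : ∀ k, 2 * (q (n + 1 + k) : ℝ) ≤ q (n + 1 + (k + 1)) := fun k => by
    exact_mod_cast tower_two_mul_le_succ hrec (m := n + 1 + k) (by omega)
  have hpos : 0 < (q (n + 1) : ℝ) := by
    exact_mod_cast (tower_two_le hrec h1 (m := n + 1) (by omega)).trans_lt' two_pos
  have hexp : 2 ≤ 2 ^ q n :=
    Nat.le_self_pow (by linarith [tower_two_le hrec h1 hn]) 2
  calc (∑' k : ℕ, (1 : ℝ) / q (n + 1 + k))
      ≤ 2 / q (n + 1) := tsum_one_div_le_of_two_mul_le hpos hdouble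
    _ = 2 / (2 * (2 : ℝ) ^ n) ^ (2 ^ q n) := by rw [hrec n hn]; push_cast; rw [pow_succ']
    _ < 1 / ((2 : ℝ) ^ n) ^ (2 ^ q n) := two_div_two_mul_pow_lt (by positivity) hexp
end

section
/- Define q : ℕ → ℕ recursively by q₁ = 2 and q_{n+1} = (2^{n+1})^{2^{q_n}}, and set α := ∑_{n=1}^∞ 1/q_n. Then α satisfies property (UL): for every λ > 1 and every N ∈ ℕ, the inequality |α − p/q| < λ^{−q^N} has infinitely many solutions p, q ∈ ℕ with gcd(p,q) = 1. -/
/-!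
The denominators `q_n` are powers of two with `2 q_n ∣ q_{n+1}`, so the partial sum
`s_n = ∑_{k ≤ n} 1/q_k` equals `p_n / q_n` with `p_n = ∑_{k ≤ n} q_n / q_k` odd, and the tail of
the series is dominated by a geometric one: `|α - s_n| ≤ 2 / q_{n+1}`. Since
`q_{n+1} ≥ 2^{2^{q_n}}` and `2^{2^x}` eventually exceeds `2 λ^{x^N}` for fixed `λ` and `N`, every
large `n` gives a solution `(p_n, q_n)`.
-/

open Filter Finset

namespace Nat

theorem eventually_mul_pow_add_one_le_two_pow (M N : ℕ) :
    ∀ᶠ x : ℕ in atTop, M * x ^ N + 1 ≤ 2 ^ x := by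
  have hsmall : ∀ᶠ x : ℕ in atTop, ((x : ℝ) ^ (N + 1) / 2 ^ x) < 1 :=
    (tendsto_order.1 (tendsto_pow_const_div_const_pow_of_one_lt (N + 1) one_lt_two)).2 1 one_pos
  filter_upwards [hsmall, eventually_ge_atTop (M + 1)] with x hx hMx
  have hlt : x ^ (N + 1) < 2 ^ x := by
    rw [div_lt_one (by positivity)] at hx
    exact_mod_cast hx
  have hpos : 1 ≤ x ^ N := Nat.one_le_pow _ _ (by omega)
  calc M * x ^ N + 1 ≤ (M + 1) * x ^ N := by rw [add_mul]; omega
    _ ≤ x * x ^ N := Nat.mul_le_mul_right _ hMx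
    _ = x ^ (N + 1) := (pow_succ' ..).symm
    _ ≤ 2 ^ x := hlt.le

end Nat

theorem Real.eventually_two_mul_pow_pow_lt {l : ℝ} (hl : 1 < l) (N : ℕ) :
    ∀ᶠ x : ℕ in atTop, 2 * l ^ (x ^ N) < 2 ^ 2 ^ x := by
  obtain ⟨M, hM⟩ := pow_unbounded_of_one_lt l one_lt_two
  filter_upwards [Nat.eventually_mul_pow_add_one_le_two_pow M N, eventually_ge_atTop 1]
    with x hx hx1
  calc 2 * l ^ (x ^ N) < 2 * ((2 : ℝ) ^ M) ^ (x ^ N) := by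
        gcongr
    _ = 2 ^ (M * x ^ N + 1) := by ring
    _ ≤ 2 ^ 2 ^ x := pow_le_pow_right₀ one_le_two hx

section HalvingTail

variable {f : ℕ → ℝ}

theorem le_mul_half_pow_of_le_half (hf : ∀ n, f (n + 1) ≤ f n / 2) (n i : ℕ) :
    f (n + i) ≤ f n * (1 / 2) ^ i := by
  induction i with
  | zero => simp
  | succ i ih =>
    calc f (n + (i + 1)) ≤ f (n + i) / 2 := hf (n + i)
      _ ≤ f n * (1 / 2) ^ i / 2 := by gcongr
      _ = f n * (1 / 2) ^ (i + 1) := by ring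

theorem summable_of_le_half (h0 : ∀ n, 0 ≤ f n) (hf : ∀ n, f (n + 1) ≤ f n / 2) :
    Summable f :=
  .of_nonneg_of_le h0 (fun n => by simpa using le_mul_half_pow_of_le_half hf 0 n)
    (summable_geometric_two.mul_left (f 0))

theorem abs_tsum_sub_sum_range_le_of_le_half (h0 : ∀ n, 0 ≤ f n)
    (hf : ∀ n, f (n + 1) ≤ f n / 2) (n : ℕ) :
    |∑' k, f k - ∑ k ∈ range n, f k| ≤ 2 * f n := by
  have hsum := summable_of_le_half h0 hf
  rw [← hsum.sum_add_tsum_nat_add n, add_sub_cancel_left,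
    abs_of_nonneg (tsum_nonneg fun i => h0 _)]
  calc ∑' i, f (i + n) ≤ ∑' i, f n * (1 / 2) ^ i :=
        ((summable_nat_add_iff n).2 hsum).tsum_le_tsum
          (fun i => add_comm i n ▸ le_mul_half_pow_of_le_half hf n i)
          (summable_geometric_two.mul_left (f n))
    _ = 2 * f n := by rw [tsum_mul_left, tsum_geometric_two, mul_comm]

end HalvingTail

section DoublingDenominators

variable {Q : ℕ → ℕ}

theorem two_mul_dvd_of_lt_of_two_mul_dvd_succ (hdvd : ∀ n, 2 * Q n ∣ Q (n + 1)) {k n : ℕ}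
    (hkn : k < n) : 2 * Q k ∣ Q n := by
  induction n, hkn using Nat.le_induction with
  | base => exact hdvd k
  | succ n _ ih => exact ih.trans ((dvd_mul_left _ 2).trans (hdvd n))

theorem dvd_of_le_of_two_mul_dvd_succ (hdvd : ∀ n, 2 * Q n ∣ Q (n + 1)) {k n : ℕ}
    (hkn : k ≤ n) : Q k ∣ Q n := by
  rcases hkn.eq_or_lt with rfl | hlt
  · rfl
  · exact dvd_of_mul_left_dvd (two_mul_dvd_of_lt_of_two_mul_dvd_succ hdvd hlt)

def partialNum (Q : ℕ → ℕ) (n : ℕ) : ℕ :=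
  ∑ k ∈ range (n + 1), Q n / Q k

theorem sum_range_succ_inv_eq (hpos : ∀ n, 0 < Q n) (hdvd : ∀ n, 2 * Q n ∣ Q (n + 1))
    (n : ℕ) : ∑ k ∈ range (n + 1), (1 : ℝ) / Q k = partialNum Q n / Q n := by
  have hQn : (Q n : ℝ) ≠ 0 := by exact_mod_cast (hpos n).ne'
  rw [partialNum, Nat.cast_sum, sum_div]
  refine sum_congr rfl fun k hk => ?_
  have hQk : (Q k : ℝ) ≠ 0 := by exact_mod_cast (hpos k).ne'
  rw [Nat.cast_div (dvd_of_le_of_two_mul_dvd_succ hdvd (Nat.lt_succ_iff.1 (mem_range.1 hk))) hQk]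
  field_simp

theorem odd_partialNum (hpos : ∀ n, 0 < Q n) (hdvd : ∀ n, 2 * Q n ∣ Q (n + 1)) (n : ℕ) :
    Odd (partialNum Q n) := by
  rw [partialNum, sum_range_succ, Nat.div_self (hpos n)]
  refine (even_sum _ fun k hk => ?_).add_one
  exact even_iff_two_dvd.2 (Nat.dvd_div_of_mul_dvd
    (mul_comm 2 (Q k) ▸ two_mul_dvd_of_lt_of_two_mul_dvd_succ hdvd (mem_range.1 hk)))

end DoublingDenominators

theorem Set.infinite_of_injective_eventually_mem {α : Type*} {s : Set α} {F : ℕ → α}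
    (hF : Function.Injective F) (h : ∀ᶠ n in atTop, F n ∈ s) : s.Infinite :=
  frequently_cofinite_mem_iff_infinite.1 <|
    hF.tendsto_cofinite.frequently (Nat.cofinite_eq_atTop ▸ h.frequently)

theorem infinite_setOf_abs_tsum_inv_sub_lt {Q : ℕ → ℕ} (hpow : ∀ n, ∃ k, Q n = 2 ^ k)
    (hdvd : ∀ n, 2 * Q n ∣ Q (n + 1)) (hgrowth : ∀ n, 2 ^ 2 ^ Q n ≤ Q (n + 1))
    {l : ℝ} (hl : 1 < l) (N : ℕ) :
    {pq : ℕ × ℕ | 1 ≤ pq.2 ∧ Nat.gcd pq.1 pq.2 = 1 ∧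
      |∑' n, (1 : ℝ) / Q n - (pq.1 : ℝ) / (pq.2 : ℝ)| < l ^ (-((pq.2 : ℝ) ^ N) : ℝ)}.Infinite := by
  have hpos : ∀ n, 0 < Q n := fun n => by
    obtain ⟨k, hk⟩ := hpow n
    exact hk ▸ Nat.two_pow_pos k
  have hmono : StrictMono Q := strictMono_nat_of_lt_succ fun n => by
    have := Nat.le_of_dvd (hpos _) (hdvd n)
    have := hpos n
    omega
  have hposR : ∀ n, (0 : ℝ) < Q n := fun n => by exact_mod_cast hpos n
  have hhalf : ∀ n, (1 : ℝ) / Q (n + 1) ≤ 1 / Q n / 2 := fun n => by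
    rw [div_div, one_div_le_one_div (hposR _) (mul_pos (hposR n) two_pos), mul_comm]
    exact_mod_cast Nat.le_of_dvd (hpos _) (hdvd n)
  refine Set.infinite_of_injective_eventually_mem (F := fun n => (partialNum Q n, Q n))
    (fun m n h => hmono.injective (congrArg Prod.snd h)) ?_
  filter_upwards [hmono.tendsto_atTop.eventually (Real.eventually_two_mul_pow_pow_lt hl N)]
    with n hn
  refine ⟨hpos n, ?_, ?_⟩
  · obtain ⟨k, hk⟩ := hpow n
    exact hk ▸ (odd_partialNum hpos hdvd n).coprime_two_right.pow_right k
  · have htail := abs_tsum_sub_sum_range_le_of_le_half (f := fun k => (1 : ℝ) / Q k)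
      (fun k => (one_div_pos.2 (hposR k)).le) hhalf (n + 1)
    rw [sum_range_succ_inv_eq hpos hdvd n] at htail
    have hlpos : 0 < l ^ Q n ^ N := by positivity
    calc _ ≤ 2 * (1 / Q (n + 1) : ℝ) := htail
      _ ≤ 2 * (1 / 2 ^ 2 ^ Q n) := by gcongr; exact_mod_cast hgrowth n
      _ < 1 / l ^ Q n ^ N := by
        rw [mul_one_div, div_lt_div_iff₀ (by positivity) hlpos]
        linarith
      _ = l ^ (-((Q n : ℝ) ^ N)) := by
        rw [Real.rpow_neg (by positivity), ← Nat.cast_pow, Real.rpow_natCast, one_div]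

section Tower

variable {q : ℕ → ℕ}

theorem tower_succ_eq_two_pow (hrec : ∀ n : ℕ, 1 ≤ n → q (n + 1) = (2 ^ (n + 1)) ^ (2 ^ q n))
    (n : ℕ) : q (n + 2) = 2 ^ ((n + 2) * 2 ^ q (n + 1)) := by
  rw [hrec (n + 1) (by omega), ← pow_mul]

theorem exists_tower_eq_two_pow (h1 : q 1 = 2)
    (hrec : ∀ n : ℕ, 1 ≤ n → q (n + 1) = (2 ^ (n + 1)) ^ (2 ^ q n)) (n : ℕ) :
    ∃ k, q (n + 1) = 2 ^ k := by
  cases n with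
  | zero => exact ⟨1, h1⟩
  | succ n => exact ⟨_, tower_succ_eq_two_pow hrec n⟩

theorem two_mul_tower_dvd (h1 : q 1 = 2)
    (hrec : ∀ n : ℕ, 1 ≤ n → q (n + 1) = (2 ^ (n + 1)) ^ (2 ^ q n)) (n : ℕ) :
    2 * q (n + 1) ∣ q (n + 2) := by
  obtain ⟨k, hk⟩ := exists_tower_eq_two_pow h1 hrec n
  rw [tower_succ_eq_two_pow hrec n, hk, ← pow_succ']
  refine pow_dvd_pow 2 ?_
  calc k + 1 ≤ 2 ^ 2 ^ k := Nat.lt_two_pow_self.trans Nat.lt_two_pow_self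
    _ ≤ (n + 2) * 2 ^ 2 ^ k := Nat.le_mul_of_pos_left _ (by omega)

theorem two_pow_two_pow_tower_le (hrec : ∀ n : ℕ, 1 ≤ n → q (n + 1) = (2 ^ (n + 1)) ^ (2 ^ q n))
    (n : ℕ) : 2 ^ 2 ^ q (n + 1) ≤ q (n + 2) := by
  rw [hrec (n + 1) (by omega)]
  exact Nat.pow_le_pow_left (Nat.le_self_pow (by omega) 2) _

end Tower

/-- With `q₁ = 2`, `q_{n+1} = (2^{n+1})^{2^{q_n}}` and
`α := ∑_{n=1}^∞ 1/q_n`, the number `α` satisfies property (UL): for every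
`λ > 1` and every `N ∈ ℕ`, the inequality `|α − p/q| < λ^{−q^N}` has infinitely
many solutions `p, q ∈ ℕ` with `gcd(p,q) = 1`. -/
theorem tower_power_sum_is_ultra_liouville
    (q : ℕ → ℕ) (h1 : q 1 = 2)
    (hrec : ∀ n : ℕ, 1 ≤ n → q (n + 1) = (2 ^ (n + 1)) ^ (2 ^ q n))
    (α : ℝ) (hα : α = ∑' n : ℕ, (1 : ℝ) / q (n + 1)) :
    ∀ l : ℝ, 1 < l → ∀ N : ℕ,
      {pq : ℕ × ℕ | 1 ≤ pq.2 ∧ Nat.gcd pq.1 pq.2 = 1 ∧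
        |α - (pq.1 : ℝ) / (pq.2 : ℝ)| < l ^ (-((pq.2 : ℝ) ^ N) : ℝ)}.Infinite := by
  intro l hl N
  subst hα
  exact infinite_setOf_abs_tsum_inv_sub_lt (Q := fun n => q (n + 1))
    (exists_tower_eq_two_pow h1 hrec) (two_mul_tower_dvd h1 hrec)
    (two_pow_two_pow_tower_le hrec) hl N
end

section
/- Let α ∈ ℝ and let f, g : ℤ² → ℂ be finitely supported. Then for every n ∈ ℤ and every z ∈ 𝕋, ∑_{m∈ℤ} (f *_{2α} g)(m,n) z^m = ∑_{l∈ℤ} f̌⁽ˡ⁾(e^{2πiα(n−l)} z) · ǧ⁽ⁿ⁻ˡ⁾(e^{−2πiα l} z). -/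
open scoped ComplexConjugate

/-- The twisted convolution `(f *_{2α} g)(a) = ∑_A f(A) g(a−A) e^{−2πiα σ(a,A)}`
on finitely supported functions `ℤ² → ℂ`, where `σ((m,n),(M,N)) = mN − Mn`. -/
noncomputable def twConv (α : ℝ) (f g : ℤ × ℤ → ℂ) : ℤ × ℤ → ℂ := fun a =>
  ∑' A : ℤ × ℤ, f A * g (a - A) *
    Complex.exp (-2 * Real.pi * Complex.I * (α : ℂ) *
      ((a.1 : ℂ) * (A.2 : ℂ) - (A.1 : ℂ) * (a.2 : ℂ)))

/-- The partial Fourier transform `f̌⁽ⁿ⁾(z) = ∑_m f(m,n) z^m`. -/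
noncomputable def pFT (f : ℤ × ℤ → ℂ) (n : ℤ) (z : ℂ) : ℂ :=
  ∑' m : ℤ, f (m, n) * z ^ m

/-!
Substitute `m = M + k` in the summand `f(M, l) g(m − M, n − l) e^{−2πiα(ml − Mn)} z^m` of the
left-hand side. Since `(M + k)l − Mn = −M(n − l) − kl`, the phase splits as
`e^{2πiα(n−l)M} e^{−2πiαlk}`, and `z^{M+k} = z^M z^k` because `z ≠ 0`; the summand becomes
`f(M, l) (e^{2πiα(n−l)} z)^M · g(k, n − l) (e^{−2πiαl} z)^k`, whose sum over `M` and `k` is the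
`l`-th term of the right-hand side. All families involved have finite support, so the sums may be
reindexed, regrouped and factored freely.
-/

open Function

theorem Set.Finite.support_comp_prodMk_left {α β M : Type*} [Zero M] {f : α × β → M}
    (hf : (support f).Finite) (b : β) : (support fun a => f (a, b)).Finite :=
  hf.preimage (Prod.mk_left_injective b).injOn

theorem exp_twist_eq_zpow_mul_zpow (α : ℝ) (n l M k : ℤ) :
    Complex.exp (-2 * Real.pi * Complex.I * (α : ℂ) *
        (((M + k : ℤ) : ℂ) * (l : ℂ) - (M : ℂ) * (n : ℂ)))
      = Complex.exp (2 * Real.pi * Complex.I * (α : ℂ) * ((n : ℂ) - (l : ℂ))) ^ M *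
        Complex.exp (-2 * Real.pi * Complex.I * (α : ℂ) * (l : ℂ)) ^ k := by
  rw [← Complex.exp_int_mul, ← Complex.exp_int_mul, ← Complex.exp_add]
  congr 1
  push_cast
  ring

noncomputable def twConvFourierSummand (α : ℝ) (f g : ℤ × ℤ → ℂ) (n : ℤ) (z : ℂ)
    (q : ℤ × ℤ × ℤ) : ℂ :=
  f (q.2.1, q.1) *
      (Complex.exp (2 * Real.pi * Complex.I * (α : ℂ) * ((n : ℂ) - (q.1 : ℂ))) * z) ^ q.2.1 *
    (g (q.2.2, n - q.1) * (Complex.exp (-2 * Real.pi * Complex.I * (α : ℂ) * (q.1 : ℂ)) * z) ^ q.2.2)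

def twConvReindex : ℤ × ℤ × ℤ ≃ ℤ × ℤ × ℤ where
  toFun q := (q.2.1 + q.2.2, q.2.1, q.1)
  invFun p := (p.2.2, p.2.1, p.1 - p.2.1)
  left_inv q := by simp
  right_inv p := by simp

section

variable (α : ℝ) {f g : ℤ × ℤ → ℂ}

theorem summable_twConvFourierSummand (hf : (support f).Finite) (hg : (support g).Finite)
    (n : ℤ) (z : ℂ) : Summable (twConvFourierSummand α f g n z) := by
  refine summable_of_hasFiniteSupport <|
    ((hf.prod hg).image fun p => (p.1.2, p.1.1, p.2.1)).subset fun q hq => ?_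
  have hfq : f (q.2.1, q.1) ≠ 0 := left_ne_zero_of_mul (left_ne_zero_of_mul hq)
  have hgq : g (q.2.2, n - q.1) ≠ 0 := left_ne_zero_of_mul (right_ne_zero_of_mul hq)
  exact ⟨((q.2.1, q.1), (q.2.2, n - q.1)), ⟨hfq, hgq⟩, rfl⟩

theorem tsum_twConvFourierSummand (hf : (support f).Finite) (hg : (support g).Finite)
    (n : ℤ) (z : ℂ) :
    ∑' q, twConvFourierSummand α f g n z q
      = ∑' l : ℤ,
          pFT f l (Complex.exp (2 * Real.pi * Complex.I * (α : ℂ) * ((n : ℂ) - (l : ℂ))) * z) *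
          pFT g (n - l) (Complex.exp (-2 * Real.pi * Complex.I * (α : ℂ) * (l : ℂ)) * z) := by
  have hS := summable_twConvFourierSummand α hf hg n z
  rw [hS.tsum_prod]
  refine tsum_congr fun l => ?_
  have hf_row : Summable fun M : ℤ => f (M, l) *
      (Complex.exp (2 * Real.pi * Complex.I * (α : ℂ) * ((n : ℂ) - (l : ℂ))) * z) ^ M :=
    summable_of_hasFiniteSupport <|
      (hf.support_comp_prodMk_left l).subset (support_mul_subset_left _ _)
  have hg_row : Summable fun k : ℤ => g (k, n - l) *
      (Complex.exp (-2 * Real.pi * Complex.I * (α : ℂ) * (l : ℂ)) * z) ^ k :=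
    summable_of_hasFiniteSupport <|
      (hg.support_comp_prodMk_left (n - l)).subset (support_mul_subset_left _ _)
  exact (hf_row.tsum_mul_tsum hg_row (hS.prod_factor l)).symm

theorem tsum_twConv_mul_zpow (hf : (support f).Finite) (hg : (support g).Finite)
    (n : ℤ) {z : ℂ} (hz : z ≠ 0) :
    ∑' m : ℤ, twConv α f g (m, n) * z ^ m = ∑' q, twConvFourierSummand α f g n z q := by
  set F : ℤ × ℤ × ℤ → ℂ := fun p => f p.2 * g ((p.1, n) - p.2) *
    Complex.exp (-2 * Real.pi * Complex.I * (α : ℂ) *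
      ((p.1 : ℂ) * (p.2.2 : ℂ) - (p.2.1 : ℂ) * (n : ℂ))) * z ^ p.1 with hF
  have hF_reindex : F ∘ twConvReindex = twConvFourierSummand α f g n z := by
    ext ⟨l, M, k⟩
    simp only [hF, comp_apply, twConvReindex, Equiv.coe_fn_mk, twConvFourierSummand]
    rw [exp_twist_eq_zpow_mul_zpow, zpow_add₀ hz, mul_zpow, mul_zpow]
    simp only [Prod.mk_sub_mk, add_sub_cancel_left]
    ring
  have hF_summable : Summable F :=
    twConvReindex.summable_iff.mp (hF_reindex ▸ summable_twConvFourierSummand α hf hg n z)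
  calc ∑' m : ℤ, twConv α f g (m, n) * z ^ m = ∑' m : ℤ, ∑' A : ℤ × ℤ, F (m, A) := by
        simp only [twConv, hF, tsum_mul_right]
    _ = ∑' q, F (twConvReindex q) := by rw [← hF_summable.tsum_prod, twConvReindex.tsum_eq]
    _ = ∑' q, twConvFourierSummand α f g n z q := by rw [← hF_reindex]; rfl

end

/-- For `α ∈ ℝ`, finitely supported `f, g : ℤ² → ℂ`, `n ∈ ℤ`
and `z ∈ 𝕋`:
`∑_m (f *_{2α} g)(m,n) z^m
  = ∑_l f̌⁽ˡ⁾(e^{2πiα(n−l)} z) · ǧ⁽ⁿ⁻ˡ⁾(e^{−2πiα l} z)`. -/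
theorem twisted_convolution_partial_fourier
    (α : ℝ) (f g : ℤ × ℤ → ℂ)
    (hf : (Function.support f).Finite) (hg : (Function.support g).Finite)
    (n : ℤ) (z : ℂ) (hz : ‖z‖ = 1) :
    ∑' m : ℤ, twConv α f g (m, n) * z ^ m
      = ∑' l : ℤ,
          pFT f l (Complex.exp (2 * Real.pi * Complex.I * (α : ℂ) * ((n : ℂ) - (l : ℂ))) * z) *
          pFT g (n - l) (Complex.exp (-2 * Real.pi * Complex.I * (α : ℂ) * (l : ℂ)) * z) := by
  have hz0 : z ≠ 0 := norm_ne_zero_iff.mp (hz ▸ one_ne_zero)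
  rw [tsum_twConv_mul_zpow α hf hg n hz0, tsum_twConvFourierSummand α hf hg n z]
end

section
/- Let α ∈ ℝ, let μ be a finite Borel measure on 𝕋, and let f : ℤ² → ℂ be finitely supported. Then ∑_{m∈ℤ} μ̌(m) · (f^⋆ *_{2α} f)(m, 0) = ∑_{n∈ℤ} ∫_𝕋 |f̌⁽ⁿ⁾(e^{2πiαn} z)|² dμ(z); in particular the left-hand side is a nonnegative real number. -/
open MeasureTheory
open scoped ComplexConjugate

noncomputable instance : MeasurableSpace Circle := borel Circle
instance : BorelSpace Circle := ⟨rfl⟩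

/-- The involution `f^⋆(a) = conj (f (−a))`. -/
noncomputable def fStar (f : ℤ × ℤ → ℂ) : ℤ × ℤ → ℂ := fun a => conj (f (-a))

/-!
Both sides are the finite sum
`∑ₙ ∑_{k,j} f(k,n) conj f(j,n) e^{2πiαn(k-j)} μ̌(k-j)`.
On the right, `|∑ₖ cₖ uᵏ|² = ∑_{k,j} cₖ conj cⱼ u^{k-j}` for `u ∈ 𝕋`, applied with
`u = e^{2πiαn} z` and integrated term by term. On the left, for `a = (m, 0)` the twist is
`e^{2πiαnm}` and only points of the same row `n` interact:
`(f^⋆ *_{2α} f)(m,0) = ∑_{(j,n)} conj f(j,n) f(m+j,n) e^{2πiαnm}`; then substitute `k = m + j`.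
-/

open Real

noncomputable def twist (α : ℝ) (n : ℤ) : Circle := Circle.exp (2 * π * α * n)

theorem coe_twist (α : ℝ) (n : ℤ) :
    (twist α n : ℂ) = Complex.exp (2 * π * Complex.I * α * n) := by
  rw [twist, Circle.coe_exp]
  push_cast
  ring_nf

theorem exists_finset_forall_mem_of_support_finite {ι M : Type*} [Zero M] {f : ι × ι → M}
    (hf : (Function.support f).Finite) : ∃ R : Finset ι, ∀ k n, f (k, n) ≠ 0 → k ∈ R ∧ n ∈ R := by
  classical
  refine ⟨hf.toFinset.image Prod.fst ∪ hf.toFinset.image Prod.snd, fun k n h => ?_⟩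
  have hmem : (k, n) ∈ hf.toFinset := by simpa using h
  exact ⟨Finset.mem_union_left _ (Finset.mem_image_of_mem _ hmem),
    Finset.mem_union_right _ (Finset.mem_image_of_mem Prod.snd hmem)⟩

theorem hasSum_sum_sub_of_add_mem {A M : Type*} [AddGroup A] [AddCommMonoid M] [TopologicalSpace M]
    {G : A → M} {R : Finset A} (j : A) (hG : ∀ m, G m ≠ 0 → m + j ∈ R) :
    HasSum G (∑ k ∈ R, G (k - j)) := by
  rw [← (Equiv.subRight j).hasSum_iff]
  refine hasSum_sum_of_ne_finset_zero fun k hk => ?_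
  by_contra h
  exact hk (by simpa using hG _ h)

theorem ofReal_norm_sq_sum_zpow (s : Finset ℤ) (c : ℤ → ℂ) (u : Circle) :
    ((‖∑ k ∈ s, c k * (u : ℂ) ^ k‖ ^ 2 : ℝ) : ℂ)
      = ∑ k ∈ s, ∑ j ∈ s, c k * conj (c j) * (u : ℂ) ^ (k - j) := by
  rw [Complex.ofReal_pow, ← Complex.mul_conj', map_sum, Finset.sum_mul_sum]
  refine Finset.sum_congr rfl fun k _ => Finset.sum_congr rfl fun j _ => ?_
  rw [map_mul, map_zpow₀, ← Circle.coe_inv_eq_conj, Circle.coe_inv, inv_zpow,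
    zpow_sub₀ (Circle.coe_ne_zero u)]
  ring

theorem integral_norm_sq_sum_zpow (μ : Measure Circle) [IsFiniteMeasure μ] (s : Finset ℤ)
    (c : ℤ → ℂ) (w : Circle) :
    ((∫ z : Circle, ‖∑ k ∈ s, c k * ((w : ℂ) * z) ^ k‖ ^ 2 ∂μ : ℝ) : ℂ)
      = ∑ k ∈ s, ∑ j ∈ s,
          c k * conj (c j) * (w : ℂ) ^ (k - j) * ∫ z : Circle, (z : ℂ) ^ (k - j) ∂μ := by
  have hint (i : ℤ) (a : ℂ) : Integrable (fun z : Circle => a * (z : ℂ) ^ i) μ := by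
    have hcont : Continuous fun z : Circle => (z : ℂ) ^ i :=
      continuous_subtype_val.zpow₀ i fun z => .inl (Circle.coe_ne_zero z)
    exact (continuous_const.mul hcont).integrable_of_hasCompactSupport (.of_compactSpace _)
  have hmul (z : Circle) : (w : ℂ) * z = ((w * z : Circle) : ℂ) := (Circle.coe_mul w z).symm
  rw [← integral_complex_ofReal]
  simp_rw [hmul, ofReal_norm_sq_sum_zpow, Circle.coe_mul, mul_zpow, ← mul_assoc]
  rw [integral_finsetSum _ fun k _ => integrable_finsetSum _ fun j _ => hint _ _]
  refine Finset.sum_congr rfl fun k _ => ?_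
  rw [integral_finsetSum _ fun j _ => hint _ _]
  exact Finset.sum_congr rfl fun j _ => integral_const_mul _ _

theorem pFT_eq_sum {f : ℤ × ℤ → ℂ} {n : ℤ} {s : Finset ℤ} (hs : ∀ k, f (k, n) ≠ 0 → k ∈ s)
    (w : ℂ) : pFT f n w = ∑ k ∈ s, f (k, n) * w ^ k :=
  tsum_eq_sum fun k hk => by rw [not_imp_comm.1 (hs k) hk, zero_mul]

theorem twConv_fStar_apply_zero {f : ℤ × ℤ → ℂ} {R : Finset ℤ}
    (hR : ∀ k n, f (k, n) ≠ 0 → k ∈ R ∧ n ∈ R) (α : ℝ) (m : ℤ) :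
    twConv α (fStar f) f (m, 0)
      = ∑ j ∈ R, ∑ n ∈ R, conj (f (j, n)) * f (m + j, n) * (twist α n : ℂ) ^ m := by
  rw [twConv, ← (Equiv.neg (ℤ × ℤ)).tsum_eq, tsum_eq_sum (s := R ×ˢ R), Finset.sum_product]
  · refine Finset.sum_congr rfl fun j _ => Finset.sum_congr rfl fun n _ => ?_
    simp only [Equiv.neg_apply, fStar, neg_neg, coe_twist, ← Complex.exp_int_mul]
    congr 2
    · simp
    · simp only [Prod.snd_neg]
      push_cast
      ring
  · rintro ⟨j, n⟩ h
    have hf : f (j, n) = 0 := not_imp_comm.1 (fun h' => Finset.mem_product.2 (hR j n h')) h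
    simp [fStar, hf]

theorem hasSum_integral_zpow_mul_twConv_fStar (μ : Measure Circle) {f : ℤ × ℤ → ℂ}
    {R : Finset ℤ} (hR : ∀ k n, f (k, n) ≠ 0 → k ∈ R ∧ n ∈ R) (α : ℝ) :
    HasSum (fun m : ℤ => (∫ z : Circle, (z : ℂ) ^ m ∂μ) * twConv α (fStar f) f (m, 0))
      (∑ n ∈ R, ∑ k ∈ R, ∑ j ∈ R, f (k, n) * conj (f (j, n)) * (twist α n : ℂ) ^ (k - j) *
        ∫ z : Circle, (z : ℂ) ^ (k - j) ∂μ) := by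
  simp_rw [twConv_fStar_apply_zero hR, Finset.mul_sum]
  convert hasSum_sum fun j _ => hasSum_sum fun n _ => hasSum_sum_sub_of_add_mem j fun m h =>
    (hR (m + j) n (right_ne_zero_of_mul (left_ne_zero_of_mul (right_ne_zero_of_mul h)))).1 using 1
  symm
  rw [Finset.sum_comm]
  refine Finset.sum_congr rfl fun n _ => ?_
  rw [Finset.sum_comm]
  refine Finset.sum_congr rfl fun k _ => Finset.sum_congr rfl fun j _ => ?_
  rw [sub_add_cancel]
  ring

/-- For `α ∈ ℝ`, a finite Borel measure `μ` on `𝕋` and a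
finitely supported `f : ℤ² → ℂ`:
`∑_m μ̌(m) (f^⋆ *_{2α} f)(m,0) = ∑_n ∫_𝕋 |f̌⁽ⁿ⁾(e^{2πiαn} z)|² dμ(z)`;
in particular the left-hand side is a nonnegative real number. -/
theorem state_positivity_formula
    (α : ℝ) (μ : Measure Circle) [IsFiniteMeasure μ]
    (f : ℤ × ℤ → ℂ) (hf : (Function.support f).Finite) :
    (∑' m : ℤ, (∫ z : Circle, (z : ℂ) ^ m ∂μ) * twConv α (fStar f) f (m, 0))
        = ((∑' n : ℤ, ∫ z : Circle,
            ‖pFT f n (Complex.exp (2 * Real.pi * Complex.I * (α : ℂ) * (n : ℂ)) * z)‖ ^ 2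
              ∂μ : ℝ) : ℂ)
      ∧ 0 ≤ ∑' n : ℤ, ∫ z : Circle,
            ‖pFT f n (Complex.exp (2 * Real.pi * Complex.I * (α : ℂ) * (n : ℂ)) * z)‖ ^ 2
              ∂μ := by
  obtain ⟨R, hR⟩ := exists_finset_forall_mem_of_support_finite hf
  refine ⟨?_, tsum_nonneg fun n => integral_nonneg fun z => sq_nonneg _⟩
  rw [(hasSum_integral_zpow_mul_twConv_fStar μ hR α).tsum_eq, tsum_eq_sum (s := R),
    Complex.ofReal_sum]
  · refine Finset.sum_congr rfl fun n _ => ?_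
    simp_rw [← coe_twist, pFT_eq_sum fun k hk => (hR k n hk).1, integral_norm_sq_sum_zpow]
  · intro n hn
    simp [pFT_eq_sum (s := ∅) fun k hk => absurd (hR k n hk).2 hn]
end

section
/- Let α ∈ ℝ and let μ be a finite Borel measure on 𝕋 whose topological support is all of 𝕋. If f : ℤ² → ℂ is finitely supported and ∑_{m∈ℤ} μ̌(m) · (f^⋆ *_{2α} f)(m, 0) = 0, then f = 0. (This is the faithfulness of the state ω_μ on the noncommutative torus when supp(μ) = 𝕋.) -/
/-! With `Pₙ(w) = ∑ₘ f(m,n) wᵐ` and `rₙ = e^{2πiαn}`, the autocorrelation identity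
`|∑ₖ cₖ wᵏ|² = ∑ₘ (∑_M c̄_M c_{M+m}) wᵐ` for `|w| = 1` rewrites the hypothesis as
`∫ ∑ₙ |Pₙ(rₙ z)|² dμ(z) = 0`. The integrand is continuous and nonnegative and `μ` charges every
nonempty open set, so every `Pₙ` vanishes on `𝕋`. The characters `z ↦ zᵏ` of `𝕋` are pairwise
distinct, hence linearly independent by Dedekind's lemma, and therefore `f = 0`. -/

open MeasureTheory
open scoped ComplexConjugate

open Finset Real
open scoped Pointwise

lemma zpow_circle_injective : Function.Injective fun (k : ℤ) (z : Circle) => (z : ℂ) ^ k := by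
  intro k j hkj
  by_contra hne
  have hsub : (k - j : ℝ) ≠ 0 := sub_ne_zero.2 (by exact_mod_cast hne)
  set z := Circle.exp (π / (k - j))
  have hz : z ^ (k - j) = 1 := by
    rw [zpow_sub, mul_inv_eq_one]
    exact Circle.coe_injective (by simpa using congrFun hkj z)
  refine Circle.exp_pi_ne_one ?_
  rwa [← Circle.exp_intCast_mul, Int.cast_sub, mul_div_cancel₀ _ hsub] at hz

lemma linearIndependent_zpow_circle :
    LinearIndependent ℂ fun (k : ℤ) (z : Circle) => (z : ℂ) ^ k := by
  have hinj : Function.Injective fun k : ℤ => Circle.coeHom.comp (zpowGroupHom k) :=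
    fun k j h => zpow_circle_injective (funext fun z => DFunLike.congr_fun h z)
  -- besides the families, `convert` leaves two defeq `Semiring ℂ` instances to identify
  convert (linearIndependent_monoidHom Circle ℂ).comp _ hinj using 1
  · rfl
  · rfl

lemma eq_zero_of_sum_zpow_circle_eq_zero {c : ℤ → ℂ} {B : Finset ℤ}
    (h : ∀ w : Circle, ∑ k ∈ B, c k * (w : ℂ) ^ k = 0) : ∀ k ∈ B, c k = 0 :=
  linearIndependent_iff'.1 linearIndependent_zpow_circle B c (funext fun w => by simpa using h w)

lemma ofReal_norm_sum_zpow_sq {c : ℤ → ℂ} {B : Finset ℤ} (hc : ∀ k ∉ B, c k = 0)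
    (w : Circle) :
    ((‖∑ k ∈ B, c k * (w : ℂ) ^ k‖ ^ 2 : ℝ) : ℂ)
      = ∑ m ∈ B - B, (∑ M ∈ B, conj (c M) * c (m + M)) * (w : ℂ) ^ m := by
  have hw : (w : ℂ) ≠ 0 := w.coe_ne_zero
  have hshift (M : ℤ) (hM : M ∈ B) : ∑ k ∈ B, c k * (w : ℂ) ^ (k - M)
      = ∑ m ∈ B - B, c (m + M) * (w : ℂ) ^ m := by
    have hsub : B.map (Equiv.subRight M).toEmbedding ⊆ B - B := by
      simpa [subset_iff] using fun m hm => by simpa using sub_mem_sub hm hM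
    rw [← sum_subset hsub, sum_map]
    · simp
    · intro m _ hm
      rw [hc (m + M) fun h => hm (by simpa using h), zero_mul]
  have hconj (M : ℤ) : conj ((w : ℂ) ^ M) = (w : ℂ) ^ (-M) := by
    rw [← Circle.coe_zpow, ← Circle.coe_inv_eq_conj, ← zpow_neg, Circle.coe_zpow]
  rw [Complex.ofReal_pow, ← Complex.mul_conj', map_sum, sum_mul_sum, sum_comm]
  calc _ = ∑ M ∈ B, conj (c M) * ∑ k ∈ B, c k * (w : ℂ) ^ (k - M) := by
        refine sum_congr rfl fun M _ => ?_
        rw [mul_sum]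
        refine sum_congr rfl fun k _ => ?_
        rw [map_mul, hconj, sub_eq_add_neg, zpow_add₀ hw]
        ring
    _ = ∑ M ∈ B, ∑ m ∈ B - B, conj (c M) * c (m + M) * (w : ℂ) ^ m := by
        refine sum_congr rfl fun M hM => ?_
        rw [hshift M hM, mul_sum]
        simp_rw [mul_assoc]
    _ = _ := by
        rw [sum_comm]
        simp_rw [sum_mul]

lemma twConv_fStar_self_apply (α : ℝ) {f : ℤ × ℤ → ℂ} {B : Finset ℤ}
    (hB : Function.support f ⊆ ↑(B ×ˢ B)) (m : ℤ) :
    twConv α (fStar f) f (m, 0) = ∑ N ∈ B,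
      (∑ M ∈ B, conj (f (M, N)) * f (m + M, N)) * (Circle.exp (2 * π * α * N) : ℂ) ^ m := by
  have hf (s : ℤ × ℤ) (hs : s ∉ B ×ˢ B) : f s = 0 := Function.notMem_support.1 fun h => hs (hB h)
  unfold twConv
  rw [← (Equiv.neg (ℤ × ℤ)).tsum_eq, tsum_eq_sum (s := B ×ˢ B), sum_product_right]
  · simp_rw [sum_mul]
    refine sum_congr rfl fun N _ => sum_congr rfl fun M _ => ?_
    rw [← Circle.coe_zpow, ← Circle.exp_intCast_mul, Circle.coe_exp]
    simp only [fStar, Equiv.neg_apply, neg_neg, Prod.fst_neg, Prod.snd_neg,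
      sub_neg_eq_add, Prod.mk_add_mk, zero_add]
    congr 2
    push_cast
    ring
  · intro s hs
    simp [fStar, hf s hs]

lemma integrable_coe_zpow (μ : Measure Circle) [IsFiniteMeasure μ] (m : ℤ) :
    Integrable (fun z : Circle => (z : ℂ) ^ m) μ :=
  Continuous.integrable_of_hasCompactSupport (by fun_prop (disch := simp)) (.of_compactSpace _)

lemma tsum_moment_mul_twConv_eq_integral (α : ℝ) (μ : Measure Circle) [IsFiniteMeasure μ]
    {f : ℤ × ℤ → ℂ} {B : Finset ℤ} (hB : Function.support f ⊆ ↑(B ×ˢ B)) :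
    ∑' m : ℤ, (∫ z : Circle, (z : ℂ) ^ m ∂μ) * twConv α (fStar f) f (m, 0)
      = ((∫ z, ∑ N ∈ B,
          ‖∑ k ∈ B, f (k, N) * ((Circle.exp (2 * π * α * N) * z : Circle) : ℂ) ^ k‖ ^ 2 ∂μ : ℝ) :
          ℂ) := by
  have hf (s : ℤ × ℤ) (hs : s ∉ B ×ˢ B) : f s = 0 := Function.notMem_support.1 fun h => hs (hB h)
  have hvanish (m : ℤ) (hm : m ∉ B - B) : twConv α (fStar f) f (m, 0) = 0 := by
    rw [twConv_fStar_self_apply α hB]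
    refine sum_eq_zero fun N _ => ?_
    rw [sum_eq_zero fun M hM => ?_, zero_mul]
    rw [hf (m + M, N) fun h => hm ?_, mul_zero]
    simpa using sub_mem_sub (mem_product.1 h).1 hM
  calc _ = ∑ m ∈ B - B, (∫ z : Circle, (z : ℂ) ^ m ∂μ) * twConv α (fStar f) f (m, 0) :=
        tsum_eq_sum fun m hm => by rw [hvanish m hm, mul_zero]
    _ = ∫ z, ∑ m ∈ B - B, (z : ℂ) ^ m * twConv α (fStar f) f (m, 0) ∂μ := by
        rw [integral_finsetSum _ fun m _ => (integrable_coe_zpow μ m).mul_const _]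
        simp_rw [integral_mul_const]
    _ = _ := by
        rw [← integral_complex_ofReal]
        refine integral_congr_ae (ae_of_all _ fun z => ?_)
        beta_reduce
        rw [Complex.ofReal_sum]
        simp_rw [twConv_fStar_self_apply α hB, mul_sum]
        rw [sum_comm]
        refine sum_congr rfl fun N hN => ?_
        rw [ofReal_norm_sum_zpow_sq fun k hk => hf _ fun h => hk (mem_product.1 h).1]
        refine sum_congr rfl fun m _ => ?_
        rw [Circle.coe_mul, mul_zpow]
        ring

/-- Let `μ` be a finite Borel measure on `𝕋` with full
topological support (every nonempty open set has positive measure).  If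
`f : ℤ² → ℂ` is finitely supported and `∑_m μ̌(m)(f^⋆ *_{2α} f)(m,0) = 0`,
then `f = 0`: the state `ω_μ` is faithful when `supp(μ) = 𝕋`. -/
theorem faithfulness_of_state
    (α : ℝ) (μ : Measure Circle) [IsFiniteMeasure μ]
    (hsupp : ∀ U : Set Circle, IsOpen U → U.Nonempty → 0 < μ U)
    (f : ℤ × ℤ → ℂ) (hf : (Function.support f).Finite)
    (hzero : ∑' m : ℤ, (∫ z : Circle, (z : ℂ) ^ m ∂μ) * twConv α (fStar f) f (m, 0) = 0) :
    f = 0 := by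
  classical
  have : μ.IsOpenPosMeasure := ⟨fun U hU hne => (hsupp U hU hne).ne'⟩
  obtain ⟨B, hB⟩ : ∃ B : Finset ℤ, Function.support f ⊆ ↑(B ×ˢ B) :=
    ⟨hf.toFinset.image Prod.fst ∪ hf.toFinset.image Prod.snd, fun a ha => by
      simp only [coe_product, Set.mem_prod, mem_coe, mem_union, mem_image, Set.Finite.mem_toFinset]
      exact ⟨.inl ⟨a, ha, rfl⟩, .inr ⟨a, ha, rfl⟩⟩⟩
  set F : Circle → ℝ := fun z => ∑ N ∈ B,
    ‖∑ k ∈ B, f (k, N) * ((Circle.exp (2 * π * α * N) * z : Circle) : ℂ) ^ k‖ ^ 2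
  have hF_cont : Continuous F := by fun_prop (disch := simp)
  have hF_zero (z : Circle) : F z = 0 := by
    by_contra hz
    refine (integral_pos_of_integrable_nonneg_nonzero (μ := μ) hF_cont
      (hF_cont.integrable_of_hasCompactSupport (.of_compactSpace _))
      (fun z => by positivity) hz).ne' ?_
    exact_mod_cast (tsum_moment_mul_twConv_eq_integral α μ hB).symm.trans hzero
  have hrow (N : ℤ) (hN : N ∈ B) (w : Circle) : ∑ k ∈ B, f (k, N) * (w : ℂ) ^ k = 0 := by
    simpa using (sum_eq_zero_iff_of_nonneg (fun N _ => by positivity)).1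
      (hF_zero ((Circle.exp (2 * π * α * N))⁻¹ * w)) N hN
  ext ⟨k, N⟩
  by_contra hkN
  obtain ⟨hk, hN⟩ := mem_product.1 (hB hkN)
  exact hkN (eq_zero_of_sum_zpow_circle_eq_zero (hrow N hN) k hk)
end

section
/- Let α ∈ ℝ, let R := R_α be the rotation by e^{2πiα} on 𝕋 with Haar probability measure m, and let h : 𝕋 → 𝕋 be a homeomorphism. Suppose the map f := h ∘ R² ∘ h⁻¹ is such that the pushforward measure m ∘ f⁻¹ is mutually absolutely continuous with m. Set μ := m ∘ h (i.e., μ(E) = m(h(E)), the pushforward of m under h⁻¹). Then for every n ∈ ℤ, the measures μ ∘ R^n and μ ∘ R^{−n} are mutually absolutely continuous. -/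
/-! Since `h⁻¹ ∘ f = R² ∘ h⁻¹`, the hypothesis says that `R²` preserves the measure class of
`μ = h⁻¹_* m`. The group elements whose action preserves a measure class form a subgroup, so `R²ⁿ`
preserves it as well, and pushing `R²ⁿ_* μ ~ μ` forward by `R⁻ⁿ` gives `Rⁿ_* μ ~ R⁻ⁿ_* μ`. -/

open MeasureTheory

namespace MeasureTheory.Measure

variable {G α : Type*} [Group G] [MulAction G α] [MeasurableSpace α] [MeasurableConstSMul G α]

theorem map_smul_map_smul (μ : Measure α) (g k : G) :
    (μ.map (k • ·)).map (g • ·) = μ.map ((g * k) • ·) := by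
  rw [map_map (measurable_const_smul g) (measurable_const_smul k)]
  simp only [Function.comp_def, mul_smul]

def quasiInvariantSubgroup (μ : Measure α) : Subgroup G where
  carrier := {g | μ.map (g • ·) ≪ μ ∧ μ ≪ μ.map (g • ·)}
  one_mem' := by
    simp only [Set.mem_ofPred_eq, one_smul, map_id', AbsolutelyContinuous.rfl, and_self]
  mul_mem' := by
    rintro g k ⟨hg, hg'⟩ ⟨hk, hk'⟩
    rw [Set.mem_ofPred_eq, ← map_smul_map_smul]
    exact ⟨(hk.map (measurable_const_smul g)).trans hg,
      hg'.trans (hk'.map (measurable_const_smul g))⟩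
  inv_mem' := by
    rintro g ⟨hg, hg'⟩
    have hcancel : (μ.map (g • ·)).map (g⁻¹ • ·) = μ := by
      rw [map_smul_map_smul, inv_mul_cancel]
      simp only [one_smul, map_id']
    refine ⟨?_, ?_⟩
    · simpa only [hcancel] using hg'.map (measurable_const_smul g⁻¹)
    · simpa only [hcancel] using hg.map (measurable_const_smul g⁻¹)

@[simp]
theorem mem_quasiInvariantSubgroup {μ : Measure α} {g : G} :
    g ∈ quasiInvariantSubgroup μ ↔ μ.map (g • ·) ≪ μ ∧ μ ≪ μ.map (g • ·) :=
  Iff.rfl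

theorem map_zpow_smul_absolutelyContinuous_map_zpow_neg_smul {μ : Measure α} {g : G}
    (hg : g ^ (2 : ℤ) ∈ quasiInvariantSubgroup μ) (n : ℤ) :
    μ.map ((g ^ n) • ·) ≪ μ.map ((g ^ (-n)) • ·) := by
  have hpow : g ^ (2 * n) ∈ quasiInvariantSubgroup μ := by
    rw [zpow_mul]
    exact zpow_mem hg n
  have hsplit : g ^ n = g ^ (-n) * g ^ (2 * n) := by
    rw [← zpow_add]
    ring_nf
  rw [hsplit, ← map_smul_map_smul]
  exact hpow.1.map (measurable_const_smul _)

end MeasureTheory.Measure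

theorem rotation_quasi_invariance_general
    (α : ℝ) (m : Measure Circle)
    (h : Circle ≃ₜ Circle)
    (Rn : ℤ → Circle → Circle)
    (hRn : ∀ (n : ℤ) (z : Circle), Rn n z = Circle.exp (2 * Real.pi * α * n) * z)
    (f : Circle → Circle) (hfdef : ∀ z, f z = h (Rn 2 (h.symm z)))
    (hquasi : Measure.map f m ≪ m ∧ m ≪ Measure.map f m)
    (μ : Measure Circle) (hμ : μ = Measure.map h.symm m) :
    ∀ n : ℤ, Measure.map (Rn n) μ ≪ Measure.map (Rn (-n)) μ
      ∧ Measure.map (Rn (-n)) μ ≪ Measure.map (Rn n) μ := by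
  set r := Circle.exp (2 * Real.pi * α)
  have hRn_zpow : ∀ n, Rn n = (r ^ n • ·) := fun n ↦ funext fun z ↦ by
    rw [hRn, smul_eq_mul, ← Circle.exp_intCast_mul, mul_comm (n : ℝ)]
  have hR2 : μ.map (r ^ (2 : ℤ) • ·) = (m.map f).map h.symm := by
    rw [← hRn_zpow]
    have hconj : Rn 2 ∘ h.symm = h.symm ∘ f := funext fun z ↦ by simp [hfdef]
    have hR2m : Measurable (Rn 2) := by rw [hRn_zpow]; exact measurable_const_smul _
    rw [hμ, Measure.map_map hR2m h.symm.measurable, hconj,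
      Measure.map_map h.symm.measurable (by rw [funext hfdef]; fun_prop)]
  have hr2 : r ^ (2 : ℤ) ∈ Measure.quasiInvariantSubgroup μ := by
    rw [Measure.mem_quasiInvariantSubgroup, hR2, hμ]
    exact ⟨hquasi.1.map h.symm.measurable, hquasi.2.map h.symm.measurable⟩
  intro n
  simp only [hRn_zpow]
  exact ⟨Measure.map_zpow_smul_absolutelyContinuous_map_zpow_neg_smul hr2 n, by
    simpa only [neg_neg] using Measure.map_zpow_smul_absolutelyContinuous_map_zpow_neg_smul hr2 (-n)⟩

/-- Let `R^n` denote the `n`-th power of the rotation by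
`e^{2πiα}` on `𝕋` carrying the Haar probability measure `m`, let `h` be a
homeomorphism of `𝕋`, and suppose `f := h ∘ R² ∘ h⁻¹` is such that `m ∘ f⁻¹`
is mutually absolutely continuous with `m`.  Setting `μ := m ∘ h` (the
pushforward of `m` under `h⁻¹`), for every `n ∈ ℤ` the measures `μ ∘ Rⁿ` and
`μ ∘ R⁻ⁿ` are mutually absolutely continuous. -/
theorem rotation_quasi_invariance
    (α : ℝ) (m : Measure Circle) [IsProbabilityMeasure m]
    [m.IsMulLeftInvariant]
    (h : Circle ≃ₜ Circle)
    (Rn : ℤ → Circle → Circle)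
    (hRn : ∀ (n : ℤ) (z : Circle), Rn n z = Circle.exp (2 * Real.pi * α * n) * z)
    (f : Circle → Circle) (hfdef : ∀ z, f z = h (Rn 2 (h.symm z)))
    (hquasi : Measure.map f m ≪ m ∧ m ≪ Measure.map f m)
    (μ : Measure Circle) (hμ : μ = Measure.map h.symm m) :
    ∀ n : ℤ, Measure.map (Rn n) μ ≪ Measure.map (Rn (-n)) μ
      ∧ Measure.map (Rn (-n)) μ ≪ Measure.map (Rn n) μ :=
  rotation_quasi_invariance_general α m h Rn hRn f hfdef hquasi μ hμ
end
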